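/- arXiv:1802.03475 — 9 statements merged into one kernel-verified Lean document; each statement's English description precedes it below -/
import Mathlib

section
/- Converse part of Theorem 1: Let n, k, l, d, s, m be positive integers with s < n, d ≤ k, and m ∣ l. If there exists a gradient coding scheme with parameters (n, k, l, d, s, m), then d·n ≥ k·(s + m) (equivalently, d/k ≥ (s+m)/n). -/
/-!
Fix a part `j` and let the `s` stragglers contain as many of its holders (the workers assigned
`j`) as possible. On gradients supported on part `j` only the surviving holders give answers that
depend on `g j`, yet the sum they recover determines `g j ∈ ℝ^l` and each answer lies in
`ℝ^(l/m)`. Hence at least `m` holders survive, i.e. every part has at least `s + m` holders, and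
counting the pairs (worker, part assigned to it) in two ways gives `k (s + m) ≤ ∑ᵢ |Sᵢ| ≤ d n`.
-/

/-- A gradient coding scheme with parameters `(n, k, l, d, s, m)`:
assignment sets `S i ⊆ Fin k` of size at most `d`; linear encoding maps
`f i : (ℝ^l)^k →ₗ ℝ^(l/m)` depending only on the coordinates in `S i`;
and for every set `F` of `n - s` workers a recovery map `r` reconstructing
the sum `∑ j, g j` from the outputs of the workers in `F`. -/
def IsGradientCodingScheme (n k l d s m : ℕ) : Prop :=
  ∃ (S : Fin n → Finset (Fin k))
    (f : Fin n → ((Fin k → Fin l → ℝ) →ₗ[ℝ] (Fin (l / m) → ℝ))),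
    (∀ i, (S i).card ≤ d) ∧
    (∀ i (g g' : Fin k → Fin l → ℝ), (∀ j ∈ S i, g j = g' j) → f i g = f i g') ∧
    (∀ F : Finset (Fin n), F.card = n - s →
      ∃ r : (F → Fin (l / m) → ℝ) → (Fin l → ℝ),
        ∀ g : Fin k → Fin l → ℝ, r (fun i => f i.1 g) = ∑ j : Fin k, g j)

open Finset Module

def holders {ι κ : Type*} [Fintype ι] [DecidableEq κ] (S : ι → Finset κ) (j : κ) : Finset ι :=
  {i | j ∈ S i}

theorem sum_card_holders {ι κ : Type*} [Fintype ι] [Fintype κ] [DecidableEq κ]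
    (S : ι → Finset κ) : ∑ j, #(holders S j) = ∑ i, #(S i) := by
  simpa [bipartiteAbove, bipartiteBelow, holders] using
    (sum_card_bipartiteAbove_eq_sum_card_bipartiteBelow (fun i j => j ∈ S i) (s := univ)
      (t := univ)).symm

theorem Finset.exists_card_eq_card_sdiff_eq {α : Type*} [Fintype α] [DecidableEq α]
    (T : Finset α) {s : ℕ} (hs : s ≤ Fintype.card α) :
    ∃ B : Finset α, #B = s ∧ #(T \ B) = #T - s := by
  rcases le_total #T s with hTs | hsT
  · obtain ⟨B, hTB, -, hB⟩ := exists_subsuperset_card_eq (subset_univ T) hTs (by simpa using hs)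
    exact ⟨B, hB, by simp [sdiff_eq_empty_iff_subset.2 hTB, Nat.sub_eq_zero_of_le hTs]⟩
  · obtain ⟨B, hBT, hB⟩ := exists_subset_card_eq hsT
    exact ⟨B, hB, by rw [card_sdiff_of_subset hBT, hB]⟩

section Recovery

variable {ι κ K V W : Type*} [Fintype ι] [DecidableEq ι] [Fintype κ] [DecidableEq κ] [Field K]
  [AddCommGroup V] [Module K V] [AddCommGroup W] [Module K W] [FiniteDimensional K W]
  {S : ι → Finset κ} {f : ι → (κ → V) →ₗ[K] W}

theorem finrank_le_card_inter_holders_mul_finrank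
    (hdep : ∀ i (g g' : κ → V), (∀ j ∈ S i, g j = g' j) → f i g = f i g')
    {F : Finset ι} {r : (F → W) → V} (hr : ∀ g, r (fun i => f i.1 g) = ∑ j, g j) (j : κ) :
    finrank K V ≤ #(F ∩ holders S j) * finrank K W := by
  let Φ : V →ₗ[K] ((F ∩ holders S j : Finset ι) → W) :=
    LinearMap.pi fun i => (f i.1).comp (LinearMap.single K (fun _ => V) j)
  have hΦ : Function.Injective Φ := by
    intro x x' hxx
    have hanswers : (fun i : F => f i.1 (Pi.single j x)) = fun i => f i.1 (Pi.single j x') := by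
      funext i
      by_cases hi : j ∈ S i
      · exact congrFun hxx ⟨i, mem_inter.2 ⟨i.2, by simpa [holders] using hi⟩⟩
      · refine hdep i _ _ fun j' hj' => ?_
        simp [ne_of_mem_of_not_mem hj' hi]
    simpa [hr, Finset.sum_pi_single'] using congrArg r hanswers
  simpa [Φ, finrank_pi_fintype] using LinearMap.finrank_le_finrank_of_injective hΦ

theorem add_le_card_holders {s m : ℕ} (hV : 0 < finrank K V)
    (hVW : finrank K V = m * finrank K W) (hs : s ≤ Fintype.card ι)
    (hdep : ∀ i (g g' : κ → V), (∀ j ∈ S i, g j = g' j) → f i g = f i g')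
    (hrec : ∀ F : Finset ι, #F = Fintype.card ι - s →
      ∃ r : (F → W) → V, ∀ g, r (fun i => f i.1 g) = ∑ j, g j) (j : κ) :
    s + m ≤ #(holders S j) := by
  obtain ⟨B, hB, hTB⟩ := (holders S j).exists_card_eq_card_sdiff_eq hs
  obtain ⟨r, hr⟩ := hrec Bᶜ (by rw [card_compl, hB])
  have hdim := finrank_le_card_inter_holders_mul_finrank hdep hr j
  rw [inter_comm, ← sdiff_eq_inter_compl, hTB, hVW] at hdim
  have hmW : 0 < m * finrank K W := hVW ▸ hV
  have hm : 0 < m := Nat.pos_of_mul_pos_right hmW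
  have := Nat.le_of_mul_le_mul_right hdim (Nat.pos_of_mul_pos_left hmW)
  omega

end Recovery

theorem converse_gradient_coding_general
    (n k l d s m : ℕ) (hl : 0 < l) (hsn : s < n) (hml : m ∣ l)
    (h : IsGradientCodingScheme n k l d s m) :
    k * (s + m) ≤ d * n := by
  obtain ⟨S, f, hSd, hdep, hrec⟩ := h
  have hdim : finrank ℝ (Fin l → ℝ) = m * finrank ℝ (Fin (l / m) → ℝ) := by
    simp [Nat.mul_div_cancel' hml]
  have hcover (j : Fin k) : s + m ≤ #(holders S j) :=
    add_le_card_holders (by simpa using hl) hdim (by simpa using hsn.le) hdep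
      (by simpa using hrec) j
  calc k * (s + m) = ∑ _j : Fin k, (s + m) := by simp
    _ ≤ ∑ j, #(holders S j) := sum_le_sum fun j _ => hcover j
    _ = ∑ i, #(S i) := sum_card_holders S
    _ ≤ ∑ _i : Fin n, d := sum_le_sum fun i _ => hSd i
    _ = d * n := by simp [mul_comm]

/-- Converse part of Theorem 1: if a gradient coding scheme with parameters
`(n, k, l, d, s, m)` exists, then `d·n ≥ k·(s + m)`. -/
theorem converse_gradient_coding
    (n k l d s m : ℕ) (hn : 0 < n) (hk : 0 < k) (hl : 0 < l) (hd : 0 < d)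
    (hs : 0 < s) (hm : 0 < m) (hsn : s < n) (hdk : d ≤ k) (hml : m ∣ l)
    (h : IsGradientCodingScheme n k l d s m) :
    k * (s + m) ≤ d * n :=
  converse_gradient_coding_general n k l d s m hl hsn hml h
end

section
/- Claim 1 (key step in the converse of Theorem 1): Let n, k, l, d, s, m be positive integers with s < n and m ∣ l, and suppose there exists a gradient coding scheme with parameters (n, k, l, d, s, m) with assignment sets S₁, …, Sₙ ⊆ {1, …, k}. Then every data subset index must be assigned to at least s + m workers: for every j ∈ {1, …, k}, the number of indices i ∈ {1, …, n} with j ∈ Sᵢ is at least s + m. -/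
/-- Claim 1 (key step in the converse of Theorem 1): in any gradient coding scheme
with parameters `(n, k, l, d, s, m)` — given by assignment sets `S`, linear encoding
maps `f i` depending only on the coordinates in `S i`, and recovery maps for every
set of `n - s` workers — every data subset index `j` is assigned to at least
`s + m` workers. -/
theorem each_subset_assigned_to_at_least_s_plus_m_workers
    (n k l d s m : ℕ) (hn : 0 < n) (hk : 0 < k) (hl : 0 < l) (hd : 0 < d)
    (hs : 0 < s) (hm : 0 < m) (hsn : s < n) (hml : m ∣ l)
    (S : Fin n → Finset (Fin k))
    (f : Fin n → ((Fin k → Fin l → ℝ) →ₗ[ℝ] (Fin (l / m) → ℝ)))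
    (hcard : ∀ i, (S i).card ≤ d)
    (hloc : ∀ i (g g' : Fin k → Fin l → ℝ), (∀ j ∈ S i, g j = g' j) → f i g = f i g')
    (hrec : ∀ F : Finset (Fin n), F.card = n - s →
      ∃ r : (F → Fin (l / m) → ℝ) → (Fin l → ℝ),
        ∀ g : Fin k → Fin l → ℝ, r (fun i => f i.1 g) = ∑ j : Fin k, g j) :
    ∀ j : Fin k, s + m ≤ (Finset.univ.filter (fun i : Fin n => j ∈ S i)).card := by
  intro j
  by_contra hlt
  push_neg at hlt
  set T : Finset (Fin n) := Finset.univ.filter (fun i : Fin n => j ∈ S i) with hT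
  -- choose D of card s with (T \ D).card < m
  obtain ⟨D, hDcard, hTD⟩ : ∃ D : Finset (Fin n), D.card = s ∧ (T \ D).card < m := by
    rcases le_or_gt s T.card with h | h
    · obtain ⟨D, hDT, hDcard⟩ := Finset.exists_subset_card_eq h
      refine ⟨D, hDcard, ?_⟩
      have := Finset.card_sdiff_of_subset hDT
      omega
    · obtain ⟨D, hTD, hDcard⟩ := Finset.exists_superset_card_eq h.le
        (by simpa using hsn.le)
      refine ⟨D, hDcard, ?_⟩
      rw [Finset.sdiff_eq_empty_iff_subset.2 hTD]
      simpa using hm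
  set F : Finset (Fin n) := Dᶜ with hF
  have hFcard : F.card = n - s := by
    rw [hF, Finset.card_compl, hDcard, Fintype.card_fin]
  obtain ⟨r, hr⟩ := hrec F hFcard
  set E : Finset (Fin n) := F ∩ T with hE
  have hEcard : E.card < m := by
    refine lt_of_le_of_lt (Finset.card_le_card ?_) hTD
    intro x hx
    simp only [hE, hF, Finset.mem_inter, Finset.mem_compl] at hx
    simp [Finset.mem_sdiff, hx.2, hx.1]
  -- the linear map
  set φ : (Fin l → ℝ) →ₗ[ℝ] (E → Fin (l / m) → ℝ) :=
    LinearMap.pi (fun i => (f i.1).comp (LinearMap.single ℝ (fun _ : Fin k => Fin l → ℝ) j))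
    with hφ
  have hinj : Function.Injective φ := by
    intro v v' hvv'
    have hg : ∀ i : F, f i.1 (Pi.single j v) = f i.1 (Pi.single j v') := by
      rintro ⟨i, hi⟩
      by_cases hji : j ∈ S i
      · have hiE : i ∈ E := by
          simp only [hE, Finset.mem_inter]
          exact ⟨hi, by simp [hT, hji]⟩
        exact congrFun hvv' ⟨i, hiE⟩
      · refine hloc i _ _ ?_
        intro j' hj'
        have : j' ≠ j := fun h => hji (h ▸ hj')
        simp [Pi.single_apply, this]
    have hsum : (∑ j' : Fin k, Pi.single j v j') = ∑ j' : Fin k, Pi.single j v' j' := by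
      rw [← hr (Pi.single j v), ← hr (Pi.single j v')]
      exact congrArg r (funext hg)
    simpa [Finset.sum_pi_single'] using hsum
  have hle := LinearMap.finrank_le_finrank_of_injective hinj
  rw [Module.finrank_fintype_fun_eq_card] at hle
  have htgt : Module.finrank ℝ (E → Fin (l / m) → ℝ)
      = E.card * (l / m) := by
    rw [Module.finrank_pi_fintype, Finset.sum_const, smul_eq_mul]
    · simp [Module.finrank_fintype_fun_eq_card]
  rw [htgt, Fintype.card_fin] at hle
  have hlm : 0 < l / m := Nat.div_pos (Nat.le_of_dvd hl hml) hm
  have key : E.card * (l / m) < l :=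
    calc E.card * (l / m) < m * (l / m) := (Nat.mul_lt_mul_right hlm).2 hEcard
    _ = l := Nat.mul_div_cancel' hml
  omega
end

section
/- Achievability part of Theorem 1 (case k = n): Let n, l, d, s, m be positive integers with s < n, d = s + m ≤ n, and m ∣ l. Then there exists a gradient coding scheme with parameters (n, n, l, d, s, m) in which, moreover, every recovery map r_F can be taken to be linear. -/
/-- A gradient coding scheme with parameters `(n, k, l, d, s, m)` in which every
recovery map is linear: assignment sets `S i ⊆ Fin k` of size at most `d`; linear
encoding maps `f i : (ℝ^l)^k →ₗ ℝ^(l/m)` depending only on the coordinates in `S i`;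
and for every set `F` of `n - s` workers a *linear* recovery map `r` reconstructing
the sum `∑ j, g j` from the outputs of the workers in `F`. -/
def IsLinearGradientCodingScheme (n k l d s m : ℕ) : Prop :=
  ∃ (S : Fin n → Finset (Fin k))
    (f : Fin n → ((Fin k → Fin l → ℝ) →ₗ[ℝ] (Fin (l / m) → ℝ))),
    (∀ i, (S i).card ≤ d) ∧
    (∀ i (g g' : Fin k → Fin l → ℝ), (∀ j ∈ S i, g j = g' j) → f i g = f i g') ∧
    (∀ F : Finset (Fin n), F.card = n - s →
      ∃ r : (F → Fin (l / m) → ℝ) →ₗ[ℝ] (Fin l → ℝ),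
        ∀ g : Fin k → Fin l → ℝ, r (fun i => f i.1 g) = ∑ j : Fin k, g j)

set_option linter.unusedSectionVars false
set_option linter.unusedVariables false


open Polynomial Finset

namespace GCAux

noncomputable section

variable (n d m : ℕ)

/-- node points for workers -/
def α (i : Fin n) : ℝ := i.val

/-- node points for blocks -/
def β (b : Fin m) : ℝ := n + b.val

lemma α_injective : Function.Injective (α n) := by
  intro a b hab
  have := Nat.cast_injective (R := ℝ) hab
  exact Fin.val_injective this

lemma β_injective : Function.Injective (β n m) := by
  intro a b hab
  have : ((a.val : ℝ)) = b.val := by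
    simpa [β] using hab
  exact Fin.val_injective (Nat.cast_injective this)

lemma β_ne_α (b : Fin m) (i : Fin n) : β n m b ≠ α n i := by
  have h1 : (α n i) < (n : ℝ) := by
    simp only [α]; exact_mod_cast i.isLt
  have h2 : (n : ℝ) ≤ β n m b := by
    simp only [β]
    exact le_add_of_nonneg_right (by positivity)
  exact (lt_of_lt_of_le h1 h2).ne'

variable (hdn : d ≤ n) [NeZero n]

/-- assignment sets: cyclic windows of length `d` -/
def S (i : Fin n) : Finset (Fin n) :=
  Finset.univ.image (fun t : Fin d => i + Fin.castLE hdn t)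

lemma card_S_le (i : Fin n) : (S n d hdn i).card ≤ d := by
  calc (S n d hdn i).card ≤ (Finset.univ : Finset (Fin d)).card := Finset.card_image_le
  _ = d := by simp

lemma card_notMem_S_le (j : Fin n) :
    (Finset.univ.filter (fun i => j ∉ S n d hdn i)).card ≤ n - d := by
  have hinj : Function.Injective (fun t : Fin d => j - Fin.castLE hdn t) :=
    sub_right_injective.comp (Fin.castLE_injective hdn)
  have hsub : Finset.univ.image (fun t : Fin d => j - Fin.castLE hdn t) ⊆
      Finset.univ.filter (fun i => j ∈ S n d hdn i) := by
    intro i hi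
    simp only [Finset.mem_image, Finset.mem_univ, true_and] at hi
    obtain ⟨t, rfl⟩ := hi
    simp only [Finset.mem_filter, Finset.mem_univ, true_and, S, Finset.mem_image]
    exact ⟨t, sub_add_cancel _ _⟩
  have hd_le : d ≤ (Finset.univ.filter (fun i => j ∈ S n d hdn i)).card := by
    calc d = (Finset.univ.image (fun t : Fin d => j - Fin.castLE hdn t)).card := by
            rw [Finset.card_image_of_injective _ hinj]; simp
    _ ≤ _ := Finset.card_le_card hsub
  have htot := Finset.card_filter_add_card_filter_not
    (s := (Finset.univ : Finset (Fin n))) (p := fun i => j ∈ S n d hdn i)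
  simp only [Finset.card_univ, Fintype.card_fin] at htot
  omega

/-- the mask polynomial of gradient `j` -/
def u (j : Fin n) : Polynomial ℝ :=
  ∏ i ∈ Finset.univ.filter (fun i => j ∉ S n d hdn i), (X - C (α n i))

lemma u_eval_β_ne_zero (j : Fin n) (b : Fin m) : (u n d hdn j).eval (β n m b) ≠ 0 := by
  simp only [u, eval_prod, eval_sub, eval_X, eval_C]
  rw [Finset.prod_ne_zero_iff]
  intro i _
  exact sub_ne_zero.mpr (β_ne_α n m b i)

lemma u_eval_α_eq_zero {j i : Fin n} (h : j ∉ S n d hdn i) : (u n d hdn j).eval (α n i) = 0 := by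
  simp only [u, eval_prod, eval_sub, eval_X, eval_C]
  apply Finset.prod_eq_zero (i := i)
  · simp [h]
  · ring

lemma u_degree_le (j : Fin n) : (u n d hdn j).degree ≤ ((n - d : ℕ) : WithBot ℕ) := by
  rw [u]
  calc (∏ i ∈ Finset.univ.filter (fun i => j ∉ S n d hdn i), (X - C (α n i))).degree
      ≤ ∑ i ∈ Finset.univ.filter (fun i => j ∉ S n d hdn i), (X - C (α n i)).degree :=
        Polynomial.degree_prod_le _ _
    _ ≤ ∑ _i ∈ Finset.univ.filter (fun i => j ∉ S n d hdn i), (1 : WithBot ℕ) := by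
        apply Finset.sum_le_sum
        intro i _
        exact (degree_X_sub_C _).le
    _ = ((Finset.univ.filter (fun i => j ∉ S n d hdn i)).card : WithBot ℕ) := by
        rw [Finset.sum_const, nsmul_eq_mul, mul_one]
    _ ≤ ((n - d : ℕ) : WithBot ℕ) := by
        exact_mod_cast Nat.cast_le.mpr (card_notMem_S_le n d hdn j)

/-- block-extraction polynomial -/
def wp (hm : 0 < m) (j : Fin n) (b : Fin m) : Polynomial ℝ :=
  C (((u n d hdn j).eval (β n m b))⁻¹) * Lagrange.basis Finset.univ (β n m) b

lemma β_injOn : Set.InjOn (β n m) ↑(Finset.univ : Finset (Fin m)) :=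
  (β_injective n m).injOn

lemma eval_β_u_mul_wp (hm : 0 < m) (j : Fin n) (b b' : Fin m) :
    (u n d hdn j * wp n d m hdn hm j b').eval (β n m b) = if b' = b then 1 else 0 := by
  simp only [wp, eval_mul, eval_C]
  by_cases hbb : b' = b
  · subst hbb
    rw [Lagrange.eval_basis_self (β_injOn n m) (Finset.mem_univ b')]
    rw [mul_one, mul_inv_cancel₀ (u_eval_β_ne_zero n d m hdn j b')]
    simp
  · rw [Lagrange.eval_basis_of_ne hbb (Finset.mem_univ b)]
    simp [hbb]

lemma wp_degree_le (hm : 0 < m) (j : Fin n) (b : Fin m) :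
    (wp n d m hdn hm j b).degree ≤ ((m - 1 : ℕ) : WithBot ℕ) := by
  calc (wp n d m hdn hm j b).degree
      ≤ (C (((u n d hdn j).eval (β n m b))⁻¹)).degree
        + (Lagrange.basis Finset.univ (β n m) b).degree := degree_mul_le _ _
    _ ≤ 0 + ((m - 1 : ℕ) : WithBot ℕ) := by
        apply add_le_add degree_C_le
        rw [Lagrange.degree_basis (β_injOn n m) (Finset.mem_univ b)]
        simp
    _ = ((m - 1 : ℕ) : WithBot ℕ) := zero_add _

lemma u_mul_wp_degree_le (hm : 0 < m) {s : ℕ} (hdsm : d = s + m) (hsn : s < n)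
    (j : Fin n) (b : Fin m) :
    (u n d hdn j * wp n d m hdn hm j b).degree ≤ ((n - s - 1 : ℕ) : WithBot ℕ) := by
  calc (u n d hdn j * wp n d m hdn hm j b).degree
      ≤ (u n d hdn j).degree + (wp n d m hdn hm j b).degree := degree_mul_le _ _
    _ ≤ ((n - d : ℕ) : WithBot ℕ) + ((m - 1 : ℕ) : WithBot ℕ) :=
        add_le_add (u_degree_le n d hdn j) (wp_degree_le n d m hdn hm j b)
    _ = (((n - d) + (m - 1) : ℕ) : WithBot ℕ) := by exact_mod_cast (Nat.cast_add _ _).symm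
    _ ≤ ((n - s - 1 : ℕ) : WithBot ℕ) := by
        have : (n - d) + (m - 1) = n - s - 1 := by omega
        rw [this]

end

noncomputable section Main

variable (n l d m : ℕ)

def emb (hml : m ∣ l) (b : Fin m) (p : Fin (l / m)) : Fin l :=
  ⟨b.val * (l / m) + p.val, by
    have h2 : m * (l / m) = l := Nat.mul_div_cancel' hml
    have h3 : (b.val + 1) * (l / m) = b.val * (l / m) + (l / m) := Nat.succ_mul _ _
    have h4 : (b.val + 1) * (l / m) ≤ m * (l / m) := Nat.mul_le_mul_right _ b.isLt
    have := p.isLt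
    omega⟩

def fmap (hdn : d ≤ n) [NeZero n] (hm : 0 < m) (hml : m ∣ l) (i : Fin n) :
    (Fin n → Fin l → ℝ) →ₗ[ℝ] (Fin (l / m) → ℝ) where
  toFun g p := ∑ j : Fin n, ∑ b : Fin m,
      (u n d hdn j * wp n d m hdn hm j b).eval (α n i) * g j (emb l m hml b p)
  map_add' g g' := by
    funext p
    simp only [Pi.add_apply, mul_add, Finset.sum_add_distrib]
  map_smul' c g := by
    funext p
    simp only [Pi.smul_apply, smul_eq_mul, RingHom.id_apply]
    rw [Finset.mul_sum]
    refine Finset.sum_congr rfl fun j _ => ?_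
    rw [Finset.mul_sum]
    exact Finset.sum_congr rfl fun b _ => by ring

end Main

end GCAux

theorem achievability_gradient_coding'
    (n l d s m : ℕ) (hn : 0 < n) (hl : 0 < l) (hd : 0 < d)
    (hs : 0 < s) (hm : 0 < m) (hsn : s < n) (hdsm : d = s + m) (hdn : d ≤ n)
    (hml : m ∣ l) :
    ∃ (S : Fin n → Finset (Fin n))
    (f : Fin n → ((Fin n → Fin l → ℝ) →ₗ[ℝ] (Fin (l / m) → ℝ))),
    (∀ i, (S i).card ≤ d) ∧
    (∀ i (g g' : Fin n → Fin l → ℝ), (∀ j ∈ S i, g j = g' j) → f i g = f i g') ∧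
    (∀ F : Finset (Fin n), F.card = n - s →
      ∃ r : (F → Fin (l / m) → ℝ) →ₗ[ℝ] (Fin l → ℝ),
        ∀ g : Fin n → Fin l → ℝ, r (fun i => f i.1 g) = ∑ j : Fin n, g j) := by
  have : NeZero n := ⟨hn.ne'⟩
  have hL : 0 < l / m := Nat.div_pos (Nat.le_of_dvd hl hml) hm
  have hlm : m * (l / m) = l := Nat.mul_div_cancel' hml
  refine ⟨GCAux.S n d hdn, fun i => GCAux.fmap n l d m hdn hm hml i, ?_, ?_, ?_⟩
  · exact GCAux.card_S_le n d hdn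
  · intro i g g' hgg
    funext p
    simp only [GCAux.fmap, LinearMap.coe_mk, AddHom.coe_mk]
    refine Finset.sum_congr rfl fun j _ => Finset.sum_congr rfl fun b _ => ?_
    by_cases hj : j ∈ GCAux.S n d hdn i
    · rw [hgg j hj]
    · rw [eval_mul, GCAux.u_eval_α_eq_zero n d hdn hj, zero_mul, zero_mul, zero_mul]
  · intro F hF
    have hlm' : l / m * m = l := by rw [mul_comm]; exact hlm
    have hb : ∀ t : Fin l, t.val / (l / m) < m := by
      intro t
      rw [Nat.div_lt_iff_lt_mul hL]
      exact lt_of_lt_of_eq t.isLt hlm.symm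
    have hp : ∀ t : Fin l, t.val % (l / m) < l / m := fun t => Nat.mod_lt _ hL
    refine ⟨{
      toFun := fun y t => ∑ i : {x // x ∈ F},
          y i ⟨t.val % (l / m), hp t⟩ *
          (Lagrange.basis F (GCAux.α n) i.1).eval (GCAux.β n m ⟨t.val / (l / m), hb t⟩)
      map_add' := by
        intro y y'
        funext t
        simp only [Pi.add_apply, add_mul, Finset.sum_add_distrib]
      map_smul' := by
        intro c y
        funext t
        simp only [Pi.smul_apply, smul_eq_mul, RingHom.id_apply]
        rw [Finset.mul_sum]
        exact Finset.sum_congr rfl fun i _ => by ring }, ?_⟩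
    intro g
    funext t
    simp only [LinearMap.coe_mk, AddHom.coe_mk]
    set b : Fin m := ⟨t.val / (l / m), hb t⟩ with hbdef
    set p : Fin (l / m) := ⟨t.val % (l / m), hp t⟩ with hpdef
    set h : Polynomial ℝ := ∑ j : Fin n, ∑ b' : Fin m,
        C (g j (GCAux.emb l m hml b' p)) *
          (GCAux.u n d hdn j * GCAux.wp n d m hdn hm j b') with hhdef
    have hinjF : Set.InjOn (GCAux.α n) ↑F := (GCAux.α_injective n).injOn
    -- Step A : worker outputs are evaluations of h
    have hA : ∀ i : Fin n, GCAux.fmap n l d m hdn hm hml i g p = h.eval (GCAux.α n i) := by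
      intro i
      simp only [GCAux.fmap, LinearMap.coe_mk, AddHom.coe_mk, hhdef, eval_finset_sum,
        eval_mul, eval_C]
      refine Finset.sum_congr rfl fun j _ => Finset.sum_congr rfl fun b' _ => ?_
      ring
    -- Step B : degree bound
    have hdeg : h.degree < (F.card : WithBot ℕ) := by
      have h1 : h.degree ≤ ((n - s - 1 : ℕ) : WithBot ℕ) := by
        refine (Polynomial.degree_sum_le _ _).trans ?_
        rw [Finset.sup_le_iff]
        intro j _
        refine (Polynomial.degree_sum_le _ _).trans ?_
        rw [Finset.sup_le_iff]
        intro b' _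
        calc (C (g j (GCAux.emb l m hml b' p)) *
              (GCAux.u n d hdn j * GCAux.wp n d m hdn hm j b')).degree
            ≤ (C (g j (GCAux.emb l m hml b' p))).degree +
              (GCAux.u n d hdn j * GCAux.wp n d m hdn hm j b').degree := degree_mul_le _ _
          _ ≤ 0 + ((n - s - 1 : ℕ) : WithBot ℕ) :=
              add_le_add degree_C_le (GCAux.u_mul_wp_degree_le n d m hdn hm hdsm hsn j b')
          _ = ((n - s - 1 : ℕ) : WithBot ℕ) := zero_add _
      refine lt_of_le_of_lt h1 ?_
      rw [hF]
      exact Nat.cast_lt (α := WithBot ℕ) |>.mpr (by omega)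
    -- Step C : recovery computation
    have hC : (∑ i : {x // x ∈ F}, GCAux.fmap n l d m hdn hm hml i.1 g p *
        (Lagrange.basis F (GCAux.α n) i.1).eval (GCAux.β n m b)) = h.eval (GCAux.β n m b) := by
      calc (∑ i : {x // x ∈ F}, GCAux.fmap n l d m hdn hm hml i.1 g p *
            (Lagrange.basis F (GCAux.α n) i.1).eval (GCAux.β n m b))
          = ∑ i ∈ F, GCAux.fmap n l d m hdn hm hml i g p *
            (Lagrange.basis F (GCAux.α n) i).eval (GCAux.β n m b) :=
            Finset.sum_coe_sort F (fun i => GCAux.fmap n l d m hdn hm hml i g p *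
              (Lagrange.basis F (GCAux.α n) i).eval (GCAux.β n m b))
        _ = ∑ i ∈ F, h.eval (GCAux.α n i) * (Lagrange.basis F (GCAux.α n) i).eval (GCAux.β n m b) :=
            Finset.sum_congr rfl fun i _ => by rw [hA i]
        _ = (Lagrange.interpolate F (GCAux.α n) fun i => h.eval (GCAux.α n i)).eval (GCAux.β n m b) := by
            rw [Lagrange.interpolate_apply, eval_finset_sum]
            exact Finset.sum_congr rfl fun i _ => by rw [eval_mul, eval_C]
        _ = h.eval (GCAux.β n m b) := by rw [← Lagrange.eq_interpolate hinjF hdeg]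
    have hembt : GCAux.emb l m hml b p = t := by
      apply Fin.ext
      show t.val / (l / m) * (l / m) + t.val % (l / m) = t.val
      exact Nat.div_add_mod' t.val (l / m)
    have hht : h.eval (GCAux.β n m b) = ∑ j : Fin n, g j t := by
      rw [hhdef, eval_finset_sum]
      refine Finset.sum_congr rfl fun j _ => ?_
      rw [eval_finset_sum]
      have key : ∀ b' : Fin m, (C (g j (GCAux.emb l m hml b' p)) *
          (GCAux.u n d hdn j * GCAux.wp n d m hdn hm j b')).eval (GCAux.β n m b)
          = if b' = b then g j (GCAux.emb l m hml b' p) else 0 := by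
        intro b'
        rw [eval_mul, eval_C, GCAux.eval_β_u_mul_wp n d m hdn hm j b b']
        split <;> simp
      rw [Finset.sum_congr rfl fun b' _ => key b']
      rw [Finset.sum_ite_eq' Finset.univ b (fun b' => g j (GCAux.emb l m hml b' p))]
      simp [hembt]
    rw [hC, hht]
    simp [Finset.sum_apply]


/-- Achievability part of Theorem 1 (case `k = n`): if `d = s + m ≤ n`, then there
exists a gradient coding scheme with parameters `(n, n, l, d, s, m)` whose recovery
maps are all linear. -/
theorem achievability_gradient_coding
    (n l d s m : ℕ) (hn : 0 < n) (hl : 0 < l) (hd : 0 < d)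
    (hs : 0 < s) (hm : 0 < m) (hsn : s < n) (hdsm : d = s + m) (hdn : d ≤ n)
    (hml : m ∣ l) :
    IsLinearGradientCodingScheme n n l d s m := by
  exact achievability_gradient_coding' n l d s m hn hl hd hs hm hsn hdsm hdn hml
end

section
/- Theorem 1 (case k = n): Let n, l, d, s, m be positive integers with s < n, d ≤ n, and m ∣ l. Then a gradient coding scheme with parameters (n, n, l, d, s, m) exists if and only if d ≥ s + m. -/
open Finset Polynomial Function
open scoped Pointwise

section Decoding

variable {R ι V W U : Type*} [Ring R] [AddCommGroup V] [Module R V] [AddCommGroup W]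
  [Module R W] [AddCommGroup U] [Module R U]

theorem exists_decoder_iff_forall_eq_zero (F : Finset ι) (f : ι → V →ₗ[R] W)
    (φ : V →ₗ[R] U) :
    (∃ r : (F → W) → U, ∀ v, r (fun i => f i.1 v) = φ v) ↔
      ∀ v, (∀ i ∈ F, f i v = 0) → φ v = 0 := by
  constructor
  · rintro ⟨r, hr⟩ v hv
    rw [← hr, ← φ.map_zero, ← hr 0]
    congr 1
    funext i
    simp [hv i i.2]
  · intro h
    refine ⟨extend (fun v (i : F) => f i v) φ 0, fun v => ?_⟩
    refine FactorsThrough.extend_apply (fun v w hvw => ?_) _ v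
    rw [← sub_eq_zero, ← map_sub]
    refine h _ fun i hi => ?_
    rw [map_sub, sub_eq_zero]
    exact congrFun hvw ⟨i, hi⟩

end Decoding

theorem isGradientCodingScheme_iff_forall_sum_eq_zero {n k l d s m : ℕ} :
    IsGradientCodingScheme n k l d s m ↔
      ∃ (S : Fin n → Finset (Fin k))
        (f : Fin n → ((Fin k → Fin l → ℝ) →ₗ[ℝ] (Fin (l / m) → ℝ))),
        (∀ i, #(S i) ≤ d) ∧
        (∀ i (g g' : Fin k → Fin l → ℝ), (∀ j ∈ S i, g j = g' j) → f i g = f i g') ∧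
        ∀ F : Finset (Fin n), #F = n - s →
          ∀ g : Fin k → Fin l → ℝ, (∀ i ∈ F, f i g = 0) → ∑ j, g j = 0 := by
  refine exists₂_congr fun S f =>
    and_congr_right' <| and_congr_right' <| forall₂_congr fun F _ => ?_
  simpa using exists_decoder_iff_forall_eq_zero F f (∑ j, LinearMap.proj j)

theorem le_card_of_forall_apply_single_eq_zero {K ι κ : Type*} [Field K] [DecidableEq κ]
    {l m : ℕ} (hl : 0 < l) (hml : m ∣ l) (f : ι → (κ → Fin l → K) →ₗ[K] (Fin (l / m) → K))
    (E : Finset ι) (j : κ) (h : ∀ x, (∀ i ∈ E, f i (Pi.single j x) = 0) → x = 0) :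
    m ≤ #E := by
  let Φ : (Fin l → K) →ₗ[K] (E → Fin (l / m) → K) :=
    LinearMap.pi fun i => f i ∘ₗ LinearMap.single K (fun _ => Fin l → K) j
  have hΦ : Injective Φ := by
    rw [← LinearMap.ker_eq_bot, LinearMap.ker_eq_bot']
    exact fun x hx => h x fun i hi => congrFun hx ⟨i, hi⟩
  have hdim := LinearMap.finrank_le_finrank_of_injective hΦ
  simp only [Module.finrank_pi_fintype, Module.finrank_self, sum_const,
    card_univ, Fintype.card_coe, Fintype.card_fin, smul_eq_mul, mul_one] at hdim
  have hq : 0 < l / m := Nat.div_pos (Nat.le_of_dvd hl hml) (Nat.pos_of_dvd_of_pos hml hl)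
  refine Nat.le_of_mul_le_mul_right ?_ hq
  rwa [Nat.mul_div_cancel' hml]

theorem add_le_card_filter_mem {n k l s m : ℕ} (hl : 0 < l) (hml : m ∣ l)
    (S : Fin n → Finset (Fin k)) (f : Fin n → ((Fin k → Fin l → ℝ) →ₗ[ℝ] (Fin (l / m) → ℝ)))
    (hdep : ∀ i (g g' : Fin k → Fin l → ℝ), (∀ j ∈ S i, g j = g' j) → f i g = f i g')
    (hrec : ∀ F : Finset (Fin n), #F = n - s →
      ∀ g : Fin k → Fin l → ℝ, (∀ i ∈ F, f i g = 0) → ∑ j, g j = 0)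
    (j : Fin k) : s + m ≤ #{i | j ∈ S i} := by
  set A : Finset (Fin n) := {i | j ∈ S i}
  by_contra! hA
  obtain ⟨D, hDA, hD⟩ := exists_subset_card_eq (min_le_right s #A)
  obtain ⟨F, hFD, hF⟩ := exists_subset_card_eq (s := Dᶜ) (n := n - s)
    (by rw [card_compl, Fintype.card_fin, hD]; omega)
  have hm : m ≤ #(F ∩ A) := by
    refine le_card_of_forall_apply_single_eq_zero hl hml f (F ∩ A) j fun x hx => ?_
    suffices ∀ i ∈ F, f i (Pi.single j x) = 0 by
      simpa [sum_pi_single'] using hrec F hF _ this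
    intro i hi
    by_cases hiA : i ∈ A
    · exact hx i (mem_inter.2 ⟨hi, hiA⟩)
    · rw [hdep i _ 0 fun j' hj' => ?_, map_zero]
      have : j' ≠ j := by rintro rfl; simp [A, hj'] at hiA
      simp [this]
  have hFA : #(F ∩ A) ≤ #(A \ D) := card_le_card fun i hi =>
    mem_sdiff.2 ⟨(mem_inter.1 hi).2, mem_compl.1 (hFD (mem_inter.1 hi).1)⟩
  rw [card_sdiff_of_subset hDA] at hFA
  have := Nat.pos_of_dvd_of_pos hml hl
  omega

theorem sum_card_filter_mem_eq_sum_card {ι κ : Type*} [Fintype ι] [Fintype κ] [DecidableEq κ]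
    (S : ι → Finset κ) : ∑ j, #{i | j ∈ S i} = ∑ i, #(S i) := by
  simp_rw [card_eq_sum_ones, sum_filter]
  rw [sum_comm]
  simp

theorem IsGradientCodingScheme.mul_add_le {n k l d s m : ℕ} (hl : 0 < l) (hml : m ∣ l)
    (h : IsGradientCodingScheme n k l d s m) : k * (s + m) ≤ n * d := by
  obtain ⟨S, f, hS, hdep, hrec⟩ := isGradientCodingScheme_iff_forall_sum_eq_zero.1 h
  calc k * (s + m) = ∑ _j : Fin k, (s + m) := by simp
    _ ≤ ∑ j, #{i | j ∈ S i} :=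
      sum_le_sum fun j _ => add_le_card_filter_mem hl hml S f hdep hrec j
    _ = ∑ i, #(S i) := sum_card_filter_mem_eq_sum_card S
    _ ≤ ∑ _i : Fin n, d := sum_le_sum fun i _ => hS i
    _ = n * d := by simp

section Construction

variable {K : Type*} [Field K]

theorem exists_dvd_degree_lt_coeff_eq_ite (q : K[X]) (hq : q.coeff 0 ≠ 0) (m t : ℕ) :
    ∃ p, q ∣ p ∧ p.degree < ↑(q.natDegree + m) ∧
      ∀ r < m, p.coeff r = if r = t then 1 else 0 := by
  set T := PowerSeries.trunc m ((q : PowerSeries K)⁻¹ * PowerSeries.X ^ t)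
  refine ⟨q * T, dvd_mul_right _ _, ?_, fun r hr => ?_⟩
  · rcases eq_or_ne T 0 with hT | hT
    · simp [hT]
    have hq' : q ≠ 0 := fun h => hq (by simp [h])
    have hTm := (natDegree_lt_iff_degree_lt hT).2 (PowerSeries.degree_trunc_lt _ m)
    rw [degree_mul, degree_eq_natDegree hq', degree_eq_natDegree hT]
    exact_mod_cast (by omega : q.natDegree + T.natDegree < q.natDegree + m)
  · have hqinv : (q : PowerSeries K) * (q : PowerSeries K)⁻¹ = 1 :=
      PowerSeries.mul_inv_cancel _ (by rwa [Polynomial.constantCoeff_coe])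
    -- below degree `m`, truncating the second factor does not change the product
    have : (q * T).coeff r = PowerSeries.coeff r
        ((q : PowerSeries K) * ((q : PowerSeries K)⁻¹ * PowerSeries.X ^ t)) := by
      rw [coeff_mul, PowerSeries.coeff_mul]
      refine sum_congr rfl fun x hx => ?_
      rw [HasAntidiagonal.mem_antidiagonal] at hx
      rw [PowerSeries.coeff_trunc, Polynomial.coeff_coe, if_pos (by omega)]
    rw [this, ← mul_assoc, hqinv, one_mul, PowerSeries.coeff_X_pow]

theorem sum_eq_zero_of_forall_sum_mul_eval_eq_zero {κ : Type*} [Fintype κ] {m N : ℕ}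
    (p : κ → Fin m → K[X]) (hdeg : ∀ j t, (p j t).degree < N)
    (hcoeff : ∀ j t (r : Fin m), (p j t).coeff r = if r = t then 1 else 0)
    (X : Finset K) (hX : N ≤ #X) (c : κ → Fin m → K)
    (hc : ∀ x ∈ X, ∑ j, ∑ t, c j t * (p j t).eval x = 0) (t : Fin m) : ∑ j, c j t = 0 := by
  set P := ∑ j, ∑ t, c j t • p j t
  have hP : P ∈ degreeLT K N :=
    sum_mem fun j _ => sum_mem fun t _ => Submodule.smul_mem _ _ (mem_degreeLT.2 (hdeg j t))
  have hP0 : P = 0 := by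
    refine eq_zero_of_degree_lt_of_eval_finset_eq_zero X
      ((mem_degreeLT.1 hP).trans_le (by exact_mod_cast hX)) fun x hx => ?_
    simpa [P, eval_finsetSum] using hc x hx
  simpa [P, finsetSum_coeff, hcoeff] using congrArg (coeff · t) hP0

@[simps]
def encodeAt {κ : Type*} [Fintype κ] {m q l : ℕ} (p : κ → Fin m → K[X])
    (e : Fin m × Fin q ≃ Fin l) (x : K) : (κ → Fin l → K) →ₗ[K] (Fin q → K) where
  toFun g v := ∑ j, ∑ t, (p j t).eval x * g j (e (t, v))
  map_add' g g' := by ext v; simp [mul_add, sum_add_distrib]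
  map_smul' c g := by ext v; simp [mul_sum, mul_left_comm]

theorem exists_encoding_polynomials {n k s m : ℕ} (a : Fin n → K) (ha : ∀ i, a i ≠ 0)
    (S : Fin n → Finset (Fin k)) (hrep : ∀ j, s + m ≤ #{i | j ∈ S i}) :
    ∃ p : Fin k → Fin m → K[X], (∀ j t, (p j t).degree < ↑(n - s)) ∧
      (∀ j t (r : Fin m), (p j t).coeff r = if r = t then 1 else 0) ∧
      ∀ i j t, j ∉ S i → (p j t).eval (a i) = 0 := by
  have key : ∀ j (t : Fin m), ∃ p : K[X], p.degree < ↑(n - s) ∧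
      (∀ r : Fin m, p.coeff r = if r = t then 1 else 0) ∧
      ∀ i, j ∉ S i → p.eval (a i) = 0 := by
    intro j t
    set q := ∏ i ∈ {i | j ∉ S i}, (X - C (a i))
    have hq0 : q.coeff 0 ≠ 0 := by
      rw [coeff_zero_eq_eval_zero, eval_prod]
      exact prod_ne_zero_iff.2 fun i _ => by simp [ha i]
    have hqdeg : q.natDegree + m ≤ n - s := by
      have hsplit := card_filter_add_card_filter_not (s := univ) (fun i : Fin n => j ∈ S i)
      rw [card_univ, Fintype.card_fin] at hsplit
      rw [natDegree_finsetProd_X_sub_C_eq_card]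
      have := hrep j
      omega
    obtain ⟨p, hqp, hpdeg, hpcoeff⟩ := exists_dvd_degree_lt_coeff_eq_ite q hq0 m t
    refine ⟨p, hpdeg.trans_le (by exact_mod_cast hqdeg), fun r => ?_, fun i hi => ?_⟩
    · simpa [Fin.val_inj] using hpcoeff r r.2
    · refine eval_eq_zero_of_dvd_of_eval_eq_zero hqp ?_
      rw [eval_prod]
      exact prod_eq_zero (mem_filter.2 ⟨mem_univ _, hi⟩) (by simp)
  choose p hdeg hcoeff hzero using key
  exact ⟨p, hdeg, hcoeff, fun i j t => hzero j t i⟩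

end Construction

theorem isGradientCodingScheme_of_forall_add_le_card {n k l d s m : ℕ} (hml : m ∣ l)
    (S : Fin n → Finset (Fin k)) (hS : ∀ i, #(S i) ≤ d)
    (hrep : ∀ j, s + m ≤ #{i | j ∈ S i}) :
    IsGradientCodingScheme n k l d s m := by
  set a : Fin n → ℝ := fun i => (i : ℕ) + 1
  have ha : Injective a := fun i i' h => by simpa [a, Fin.val_inj] using h
  obtain ⟨p, hdeg, hcoeff, hzero⟩ :=
    exists_encoding_polynomials a (fun i => by positivity) S hrep
  let e : Fin m × Fin (l / m) ≃ Fin l :=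
    finProdFinEquiv.trans (finCongr (Nat.mul_div_cancel' hml))
  refine isGradientCodingScheme_iff_forall_sum_eq_zero.2
    ⟨S, fun i => encodeAt p e (a i), hS, ?_, ?_⟩
  · intro i g g' hgg'
    ext v
    simp only [encodeAt_apply]
    refine sum_congr rfl fun j _ => sum_congr rfl fun t _ => ?_
    by_cases hj : j ∈ S i
    · simp [hgg' j hj]
    · simp [hzero i j t hj]
  · intro F hF g hg
    ext c
    obtain ⟨⟨t, v⟩, rfl⟩ := e.surjective c
    have hc : ∀ x ∈ F.image a, ∑ j, ∑ t, g j (e (t, v)) * (p j t).eval x = 0 := by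
      rintro _ hx
      obtain ⟨i, hi, rfl⟩ := mem_image.1 hx
      simpa [mul_comm] using congrFun (hg i hi) v
    simpa using sum_eq_zero_of_forall_sum_mul_eval_eq_zero p hdeg hcoeff (F.image a)
      (by rw [card_image_of_injective _ ha, hF]) _ hc t

theorem card_filter_mem_vadd_finset {G : Type*} [AddGroup G] [Fintype G] [DecidableEq G]
    (T : Finset G) (j : G) : #({i | j ∈ i +ᵥ T} : Finset G) = #T := by
  have : ({i | j ∈ i +ᵥ T} : Finset G) = T.image (fun t => j - t) := by
    ext i
    simp [mem_vadd_finset, sub_eq_iff_eq_add, @eq_comm _ j]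
  rw [this, card_image_of_injective _ sub_right_injective]

theorem gradient_coding_tradeoff_general
    (n l d s m : ℕ) (hn : 0 < n) (hl : 0 < l) (hdn : d ≤ n) (hml : m ∣ l) :
    IsGradientCodingScheme n n l d s m ↔ s + m ≤ d := by
  refine ⟨fun h => Nat.le_of_mul_le_mul_left (h.mul_add_le hl hml) hn, fun h => ?_⟩
  have : NeZero n := ⟨hn.ne'⟩
  obtain ⟨T, -, hT⟩ := exists_subset_card_eq (s := (univ : Finset (Fin n))) (n := s + m)
    (by simpa using h.trans hdn)
  exact isGradientCodingScheme_of_forall_add_le_card hml (fun i => i +ᵥ T)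
    (fun i => by rw [card_vadd_finset, hT]; exact h)
    (fun j => by rw [card_filter_mem_vadd_finset, hT])

/-- Theorem 1 (case `k = n`): a gradient coding scheme with parameters
`(n, n, l, d, s, m)` exists if and only if `d ≥ s + m`. -/
theorem gradient_coding_tradeoff
    (n l d s m : ℕ) (hn : 0 < n) (hl : 0 < l) (hd : 0 < d)
    (hs : 0 < s) (hm : 0 < m) (hsn : s < n) (hdn : d ≤ n) (hml : m ∣ l) :
    IsGradientCodingScheme n n l d s m ↔ s + m ≤ d :=
  gradient_coding_tradeoff_general n l d s m hn hl hdn hml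
end

section
/- Locality identity for the transmitted vectors (equation (ind)): Define the (mn) × (n − s) real matrix B by B_{(i−1)m+u, j} = (coefficient of x^{j−1} in pᵢ⁽ᵘ⁾). Then for every row vector z ∈ ℝ^{mn}, written in blocks z = (y⁽¹⁾, …, y⁽ⁿ⁾) with each y⁽ʲ⁾ ∈ ℝ^m, and every i ∈ {1, …, n}: z · B · (1, θᵢ, θᵢ², …, θᵢ^{n−s−1})ᵀ = Σ_{j=0}^{d−1} Σ_{u=1}^{m} pᵢ₍⊕ⱼ₎⁽ᵘ⁾(θᵢ) · y⁽ⁱ⊕ʲ⁾_u, where i⊕j abbreviates i ⊕ j (and i ⊕ 0 := i). In particular this quantity depends only on the blocks y⁽ⁱ⁾, y⁽ⁱ⊕¹⁾, …, y⁽ⁱ⊕⁽ᵈ⁻¹⁾⁾. -/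
open Polynomial
open Fin.NatCast

/-- `gcPoly n d θ i` is the polynomial `pᵢ(x) = ∏_{j=1}^{n−d} (x − θ_{i⊕j})`,
where `⊕` is (1-indexed) addition wrapping around modulo `n`, realized here as
addition in `Fin n` (indices shifted to be 0-based). -/
noncomputable def gcPoly (n d : ℕ) [NeZero n] (θ : Fin n → ℝ) (i : Fin n) :
    Polynomial ℝ :=
  ∏ j ∈ Finset.Icc 1 (n - d), (X - C (θ (i + (j : Fin n))))

/-- `gcPolyRec n d θ i u` is the polynomial `pᵢ⁽ᵘ⁺¹⁾` (so `u = 0` gives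
`pᵢ⁽¹⁾ = pᵢ`), defined recursively by
`pᵢ⁽ᵘ⁾(x) = x·pᵢ⁽ᵘ⁻¹⁾(x) − c·pᵢ⁽¹⁾(x)` with `c` the coefficient of
`x^{n−d−1}` in `pᵢ⁽ᵘ⁻¹⁾`. -/
noncomputable def gcPolyRec (n d : ℕ) [NeZero n] (θ : Fin n → ℝ) (i : Fin n) :
    ℕ → Polynomial ℝ
  | 0 => gcPoly n d θ i
  | u + 1 => X * gcPolyRec n d θ i u
      - C ((gcPolyRec n d θ i u).coeff (n - d - 1)) * gcPoly n d θ i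

/-- The `(mn) × (n − s)` coefficient matrix `B`: the row indexed by the pair
`(i, u)` (corresponding to row `(i−1)m + u` in 1-based indexing) and column `j`
contains the coefficient of `x^{j−1}` in `pᵢ⁽ᵘ⁾`. -/
noncomputable def gcB (n d s m : ℕ) [NeZero n] (θ : Fin n → ℝ) :
    Matrix (Fin n × Fin m) (Fin (n - s)) ℝ :=
  fun r j => (gcPolyRec n d θ r.1 r.2.val).coeff j.val

/-!
Every `pᵢ⁽ᵘ⁾` has degree at most `n − d + u < n − s`, so the row `(j, u)` of `B` lists all
coefficients of `pⱼ⁽ᵘ⁾` and `z · B · (1, θᵢ, …)ᵀ = ∑ⱼ ∑ᵤ z_{j,u} pⱼ⁽ᵘ⁾(θᵢ)`. The recursion only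
ever subtracts multiples of `pⱼ`, so `pⱼ ∣ pⱼ⁽ᵘ⁾`; and for `j = i ⊕ k` with `d ≤ k < n` the
factor `x − θ_{j ⊕ (n − k)} = x − θᵢ` of `pⱼ` vanishes at `θᵢ`. Hence only the blocks
`j = i ⊕ k`, `k < d`, survive.
-/

lemma Polynomial.sum_fin_coeff_mul_pow_eq_eval {R : Type*} [Semiring R] {p : R[X]} {N : ℕ}
    (hp : p.natDegree < N) (x : R) :
    ∑ t : Fin N, p.coeff t * x ^ (t : ℕ) = p.eval x := by
  rw [eval_eq_sum_range' hp, Fin.sum_univ_eq_sum_range (fun t => p.coeff t * x ^ t)]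

lemma Fin.sum_univ_eq_sum_range_add_of_eq_zero {M : Type*} [AddCommMonoid M] {n d : ℕ}
    [NeZero n] (f : Fin n → M) (i : Fin n) (hdn : d ≤ n)
    (hf : ∀ k, d ≤ k → k < n → f (i + (k : Fin n)) = 0) :
    ∑ j, f j = ∑ k ∈ Finset.range d, f (i + (k : Fin n)) := by
  have hshift : ∑ j, f j = ∑ k ∈ Finset.range n, f (i + (k : Fin n)) := by
    rw [← Fin.sum_univ_eq_sum_range (fun k => f (i + (k : Fin n)))]
    simp only [Fin.cast_val_eq_self]
    exact (Fintype.sum_equiv (Equiv.addLeft i) _ _ fun _ => rfl).symm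
  have htail : ∑ k ∈ Finset.Ico d n, f (i + (k : Fin n)) = 0 :=
    Finset.sum_eq_zero fun k hk => hf k (Finset.mem_Ico.1 hk).1 (Finset.mem_Ico.1 hk).2
  rw [hshift, ← Finset.sum_range_add_sum_Ico _ hdn, htail, add_zero]

section

variable (n d : ℕ) [NeZero n] (θ : Fin n → ℝ) (i : Fin n)

lemma gcPoly_natDegree : (gcPoly n d θ i).natDegree = n - d := by
  simp [gcPoly]

lemma gcPolyRec_natDegree_le (u : ℕ) : (gcPolyRec n d θ i u).natDegree ≤ n - d + u := by
  induction u with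
  | zero => exact (gcPoly_natDegree n d θ i).le
  | succ u ih =>
    refine (natDegree_sub_le _ _).trans (max_le ?_ ?_)
    · exact natDegree_mul_le.trans (by rw [natDegree_X]; omega)
    · exact natDegree_C_mul_le _ _ |>.trans (by rw [gcPoly_natDegree]; omega)

lemma gcPoly_dvd_gcPolyRec (u : ℕ) : gcPoly n d θ i ∣ gcPolyRec n d θ i u := by
  induction u with
  | zero => exact dvd_rfl
  | succ u ih => exact dvd_sub (ih.mul_left X) (dvd_mul_left _ _)

lemma gcPoly_add_eval_eq_zero {k : ℕ} (hdk : d ≤ k) (hkn : k < n) :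
    (gcPoly n d θ (i + (k : Fin n))).eval (θ i) = 0 := by
  rw [gcPoly, eval_prod]
  refine Finset.prod_eq_zero (i := n - k) (by simp only [Finset.mem_Icc]; omega) ?_
  have hwrap : i + (k : Fin n) + ((n - k : ℕ) : Fin n) = i := by
    rw [add_assoc, ← Nat.cast_add, Nat.add_sub_cancel' hkn.le, Fin.natCast_self, add_zero]
  simp [hwrap]

lemma gcB_mul_pow_sum_eq_eval {s m : ℕ} (hdsm : d = s + m) (hdn : d ≤ n) (u : Fin m)
    (x : ℝ) :
    ∑ t : Fin (n - s), gcB n d s m θ (i, u) t * x ^ t.val = (gcPolyRec n d θ i u).eval x :=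
  sum_fin_coeff_mul_pow_eq_eval
    ((gcPolyRec_natDegree_le n d θ i u).trans_lt (by omega)) x

end

theorem gcB_locality_identity_general
    (n d s m : ℕ) [NeZero n] (hdsm : d = s + m)
    (hdn : d ≤ n) (θ : Fin n → ℝ) :
    (∀ (z : Fin n → Fin m → ℝ) (i : Fin n),
      ∑ j : Fin n, ∑ u : Fin m,
          z j u * ∑ t : Fin (n - s), gcB n d s m θ (j, u) t * θ i ^ t.val
        = ∑ j ∈ Finset.range d, ∑ u : Fin m,
            (gcPolyRec n d θ (i + (j : Fin n)) u.val).eval (θ i) *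
              z (i + (j : Fin n)) u) ∧
    (∀ (z z' : Fin n → Fin m → ℝ) (i : Fin n),
      (∀ j ∈ Finset.range d, z (i + (j : Fin n)) = z' (i + (j : Fin n))) →
      ∑ j : Fin n, ∑ u : Fin m,
          z j u * ∑ t : Fin (n - s), gcB n d s m θ (j, u) t * θ i ^ t.val
        = ∑ j : Fin n, ∑ u : Fin m,
            z' j u * ∑ t : Fin (n - s), gcB n d s m θ (j, u) t * θ i ^ t.val) := by
  have locality : ∀ (z : Fin n → Fin m → ℝ) (i : Fin n),
      ∑ j : Fin n, ∑ u : Fin m,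
          z j u * ∑ t : Fin (n - s), gcB n d s m θ (j, u) t * θ i ^ t.val
        = ∑ j ∈ Finset.range d, ∑ u : Fin m,
            (gcPolyRec n d θ (i + (j : Fin n)) u.val).eval (θ i) *
              z (i + (j : Fin n)) u := by
    intro z i
    simp only [gcB_mul_pow_sum_eq_eval n d θ _ hdsm hdn, mul_comm (z _ _)]
    refine Fin.sum_univ_eq_sum_range_add_of_eq_zero _ i hdn fun k hdk hkn => ?_
    refine Finset.sum_eq_zero fun u _ => ?_
    rw [eval_eq_zero_of_dvd_of_eval_eq_zero (gcPoly_dvd_gcPolyRec n d θ _ u)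
      (gcPoly_add_eval_eq_zero n d θ i hdk hkn), zero_mul]
  refine ⟨locality, fun z z' i hzz' => ?_⟩
  rw [locality z i, locality z' i]
  exact Finset.sum_congr rfl fun j hj => by rw [hzz' j hj]

/-- Locality identity (equation (ind)): for every block row vector
`z = (y⁽¹⁾, …, y⁽ⁿ⁾)` with `y⁽ʲ⁾ ∈ ℝ^m` and every `i ∈ [n]`,
`z · B · (1, θᵢ, …, θᵢ^{n−s−1})ᵀ
  = ∑_{j=0}^{d−1} ∑_{u=1}^{m} pᵢ₍⊕ⱼ₎⁽ᵘ⁾(θᵢ) · y⁽ⁱ⊕ʲ⁾_u`;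
in particular, this quantity depends only on the blocks
`y⁽ⁱ⁾, y⁽ⁱ⊕¹⁾, …, y⁽ⁱ⊕⁽ᵈ⁻¹⁾⁾` of `z`. -/
theorem gcB_locality_identity
    (n d s m : ℕ) [NeZero n] (hm : 1 ≤ m) (hs : 0 ≤ s) (hdsm : d = s + m)
    (hdn : d ≤ n) (θ : Fin n → ℝ) (hθ : Function.Injective θ) :
    (∀ (z : Fin n → Fin m → ℝ) (i : Fin n),
      ∑ j : Fin n, ∑ u : Fin m,
          z j u * ∑ t : Fin (n - s), gcB n d s m θ (j, u) t * θ i ^ t.val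
        = ∑ j ∈ Finset.range d, ∑ u : Fin m,
            (gcPolyRec n d θ (i + (j : Fin n)) u.val).eval (θ i) *
              z (i + (j : Fin n)) u) ∧
    (∀ (z z' : Fin n → Fin m → ℝ) (i : Fin n),
      (∀ j ∈ Finset.range d, z (i + (j : Fin n)) = z' (i + (j : Fin n))) →
      ∑ j : Fin n, ∑ u : Fin m,
          z j u * ∑ t : Fin (n - s), gcB n d s m θ (j, u) t * θ i ^ t.val
        = ∑ j : Fin n, ∑ u : Fin m,
            z' j u * ∑ t : Fin (n - s), gcB n d s m θ (j, u) t * θ i ^ t.val) :=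
  gcB_locality_identity_general n d s m hdsm hdn θ
end

section
/- Existence of the encoding matrix B in the numerically stable construction (Section 5): Let n, d, m be positive integers with m ≤ d ≤ n and set s = d − m. Let V be an (n − s) × n real matrix. For i ∈ {1, …, n}, let Sᵢ be the (n − d) × (n − d) submatrix of V formed by rows 1, …, n − d and the circularly consecutive columns i, i ⊕ 1, …, i ⊕ (n − d − 1). Suppose every Sᵢ is invertible. Then there exists an (mn) × (n − s) real matrix B such that: (i) the last m columns of B equal n vertically stacked copies of the m × m identity matrix I_m; and (ii) for every data-subset index j ∈ {1, …, n} and every worker index i ∈ {1, …, n} with j ∉ {i, i ⊕ 1, …, i ⊕ (d − 1)}, every entry of the product B·V lying in rows (j−1)m + 1, …, jm and column i is zero. -/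
/-!
Split the rows of `V` into its first `n − d` rows `T` and its last `m` rows `L`. If block row `j`
of `B` is `[X_j | I_m]`, then that block of `B V` is `X_j T + L`. The workers that do not hold
subset `j` are the `n − d` circularly consecutive columns starting at `j ⊕ 1`, on which `T` is the
invertible square `S_{j⊕1}`, so `X_j := −(L restricted to these columns) S_{j⊕1}⁻¹` makes the block
vanish there.
-/

namespace Matrix

variable {R : Type*} [CommRing R] {ι κ : Type*} [Fintype ι]

theorem exists_mul_add_apply_eq_zero_of_isUnit_submatrix {P : Type*} [DecidableEq ι]
    (T : Matrix ι κ R) (W : Matrix P κ R) (w : P → ι → κ) (hT : ∀ p, IsUnit (T.submatrix id (w p))) :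
    ∃ X : Matrix P ι R, ∀ p c, (X * T + W) p (w p c) = 0 := by
  let A p := -W.submatrix id (w p) * (T.submatrix id (w p))⁻¹
  have hAT p : A p * T.submatrix id (w p) = -W.submatrix id (w p) := by
    rw [Matrix.mul_assoc, nonsing_inv_mul _ ((isUnit_iff_isUnit_det _).mp (hT p)),
      Matrix.mul_one]
  refine ⟨fun p => A p p, fun p c => ?_⟩
  change (A p * T.submatrix id (w p)) p c + W p (w p c) = 0
  simp [hAT]

theorem submatrix_fromCols_mul {m n κ' μ : Type*} [Fintype κ'] [Fintype μ]
    (e : κ' ≃ ι ⊕ μ) (X : Matrix m ι R) (Y : Matrix m μ R) (V : Matrix κ' n R) :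
    (fromCols X Y).submatrix id e * V =
      X * V.submatrix (e.symm ∘ Sum.inl) id + Y * V.submatrix (e.symm ∘ Sum.inr) id := by
  have hV : V = (fromRows (V.submatrix (e.symm ∘ Sum.inl) id)
      (V.submatrix (e.symm ∘ Sum.inr) id)).submatrix e id := by
    ext k j
    obtain ⟨x | x, rfl⟩ := e.symm.surjective k <;> simp
  rw [← fromCols_mul_fromRows]
  nth_rewrite 1 [hV]
  rw [submatrix_mul_equiv, submatrix_id_id]

end Matrix

open Fin.NatCast in
theorem Fin.exists_eq_add_one_add_of_forall_ne_add {n d : ℕ} [NeZero n] {i j : Fin n}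
    (h : ∀ t ∈ Finset.range d, j ≠ i + (t : Fin n)) :
    ∃ c : Fin (n - d), i = j + 1 + (c : Fin n) := by
  obtain ⟨t, htn, hji⟩ : ∃ t < n, j = i + (t : Fin n) := ⟨(j - i).val, (j - i).isLt, by simp⟩
  have hdt : d ≤ t := by
    by_contra! hlt
    exact h t (Finset.mem_range.mpr hlt) hji
  refine ⟨⟨n - 1 - t, by omega⟩, ?_⟩
  calc i = i + ((t + 1 + (n - 1 - t) : ℕ) : Fin n) := by
        rw [show t + 1 + (n - 1 - t) = n by omega, Fin.natCast_self, add_zero]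
    _ = j + 1 + ((n - 1 - t : ℕ) : Fin n) := by
        simp only [hji, Nat.cast_add, Nat.cast_one]; abel

open Fin.NatCast in
/-- Existence of the encoding matrix `B` in the numerically stable construction
(Section 5). Given an `(n − s) × n` matrix `V` (with `s = d − m`) all of whose
`(n − d) × (n − d)` submatrices `Sᵢ` — formed by the first `n − d` rows and the
circularly consecutive columns `i, i⊕1, …, i⊕(n−d−1)` — are invertible, there is
an `(mn) × (n − s)` matrix `B` (rows indexed by pairs `(j, u)`, corresponding to
row `(j−1)m + u`) such that:
(i) the last `m` columns of `B` are `n` stacked copies of `I_m`; and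
(ii) for every data-subset index `j` and worker index `i` with
`j ∉ {i, i⊕1, …, i⊕(d−1)}`, the entries of `B·V` in rows `(j−1)m+1, …, jm` and
column `i` are all zero. -/
theorem exists_encoding_matrix_stable
    (n d m s : ℕ) [NeZero n] (hmd : m ≤ d) (hdn : d ≤ n)
    (hs : s = d - m)
    (V : Matrix (Fin (n - s)) (Fin n) ℝ)
    (hV : ∀ i : Fin n,
      IsUnit (Matrix.of fun r c : Fin (n - d) =>
        V (Fin.castLE (by omega) r) (i + (c.val : Fin n)))) :
    ∃ B : Matrix (Fin n × Fin m) (Fin (n - s)) ℝ,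
      (∀ (i : Fin n) (u u' : Fin m),
        B (i, u) ⟨n - d + u'.val, by have := u'.isLt; omega⟩ =
          if u = u' then 1 else 0) ∧
      (∀ (j i : Fin n), (∀ t ∈ Finset.range d, j ≠ i + (t : Fin n)) →
        ∀ u : Fin m, (B * V) (j, u) i = 0) := by
  let e : Fin (n - s) ≃ Fin (n - d) ⊕ Fin m := (finCongr (by omega)).trans finSumFinEquiv.symm
  let Y : Matrix (Fin n × Fin m) (Fin m) ℝ := (1 : Matrix (Fin m) (Fin m) ℝ).submatrix Prod.snd id
  obtain ⟨X, hX⟩ := Matrix.exists_mul_add_apply_eq_zero_of_isUnit_submatrix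
    (V.submatrix (e.symm ∘ Sum.inl) id) (Y * V.submatrix (e.symm ∘ Sum.inr) id)
    (fun p c => p.1 + 1 + (c : Fin n)) (fun p => hV (p.1 + 1))
  refine ⟨(Matrix.fromCols X Y).submatrix id e, fun i u u' => ?_, fun j i hji u => ?_⟩
  · have he : e ⟨n - d + u'.val, by omega⟩ = Sum.inr u' := finSumFinEquiv_symm_apply_natAdd u'
    simp [he, Y, Matrix.one_apply]
  · rw [Matrix.submatrix_fromCols_mul]
    obtain ⟨c, rfl⟩ := Fin.exists_eq_add_one_add_of_forall_ne_add hji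
    exact hX (j, u) c
end

section
/- Proposition 1: Let n ≥ 2 be an integer and t₁, λ₁ > 0 real numbers. For integers d with 1 ≤ d ≤ n define E(d) := d·t₁ + (d/λ₁)·Σ_{i=d}^{n} (1/i). If λ₁·t₁ < (1/(n−1))·Σ_{i=2}^{n} (1/i), then E(n) ≤ E(d) for every d ∈ {1, …, n} (i.e., d = n minimizes E). If λ₁·t₁ ≥ (1/(n−1))·Σ_{i=2}^{n} (1/i), then E(1) ≤ E(d) for every d ∈ {1, …, n} (i.e., d = 1 minimizes E). -/
/-- Expected total runtime `E(d) = d·t₁ + (d/λ₁)·∑_{i=d}^{n} 1/i` of the gradient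
coding scheme with parameters `(d, s, m) = (d, d − 1, 1)` in the
computation-dominant regime of the shifted-exponential runtime model. -/
noncomputable def expectedRuntime (n : ℕ) (t₁ lam₁ : ℝ) (d : ℕ) : ℝ :=
  (d : ℝ) * t₁ + ((d : ℝ) / lam₁) * ∑ i ∈ Finset.Icc d n, (1 : ℝ) / (i : ℝ)

namespace OptDAux

noncomputable def S (n d : ℕ) : ℝ := ∑ i ∈ Finset.Icc d n, (1 : ℝ) / (i : ℝ)

lemma E_eq (n : ℕ) (t₁ lam₁ : ℝ) (d : ℕ) :
    expectedRuntime n t₁ lam₁ d = (d : ℝ) * t₁ + ((d : ℝ) / lam₁) * S n d := rfl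

lemma S_succ (n k : ℕ) (h : k ≤ n) : S n k = 1 / (k : ℝ) + S n (k + 1) := by
  have hins : Finset.Icc k n = insert k (Finset.Icc (k + 1) n) := by
    ext x; simp only [Finset.mem_Icc, Finset.mem_insert]; omega
  have hnot : k ∉ Finset.Icc (k + 1) n := by simp
  rw [S, hins, Finset.sum_insert hnot]; rfl

lemma S_mono (n : ℕ) {j k : ℕ} (h : j ≤ k) : S n k ≤ S n j :=
  Finset.sum_le_sum_of_subset_of_nonneg (Finset.Icc_subset_Icc h le_rfl)
    (fun i _ _ => by positivity)

lemma diff_eq (n : ℕ) (t₁ lam₁ : ℝ) (hlam : lam₁ ≠ 0) (k : ℕ) (hk : 1 ≤ k) (hkn : k ≤ n) :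
    expectedRuntime n t₁ lam₁ (k + 1)
      = expectedRuntime n t₁ lam₁ k + (t₁ + (1 / lam₁) * (S n (k + 1) - 1)) := by
  have hk0 : (k : ℝ) ≠ 0 := Nat.cast_ne_zero.mpr (by omega)
  rw [E_eq, E_eq, S_succ n k hkn]
  push_cast
  field_simp
  ring

lemma up (n : ℕ) (t₁ lam₁ : ℝ) (hlam : 0 < lam₁) :
    ∀ d, 1 ≤ d → d ≤ n → 0 ≤ t₁ + (1 / lam₁) * (S n (d + 1) - 1) →
      expectedRuntime n t₁ lam₁ 1 ≤ expectedRuntime n t₁ lam₁ d := by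
  intro d hd
  induction d, hd using Nat.le_induction with
  | base => intro _ _; exact le_rfl
  | succ m hm ih =>
    intro hmn hpos
    have hmn' : m ≤ n := by omega
    have hmono : S n (m + 1 + 1) ≤ S n (m + 1) := S_mono n (by omega)
    have hinv : (0:ℝ) ≤ 1 / lam₁ := by positivity
    have hpos' : 0 ≤ t₁ + (1 / lam₁) * (S n (m + 1) - 1) := by
      have := mul_le_mul_of_nonneg_left (by linarith : S n (m+1+1) - 1 ≤ S n (m+1) - 1) hinv
      linarith
    have h1 := ih hmn' hpos'
    rw [diff_eq n t₁ lam₁ hlam.ne' m hm hmn']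
    linarith

lemma down (n : ℕ) (t₁ lam₁ : ℝ) (hlam : 0 < lam₁) (d : ℕ) (hd : 1 ≤ d)
    (hneg : t₁ + (1 / lam₁) * (S n (d + 1) - 1) ≤ 0) :
    ∀ m, d ≤ m → m ≤ n → expectedRuntime n t₁ lam₁ m ≤ expectedRuntime n t₁ lam₁ d := by
  intro m hdm
  induction m, hdm using Nat.le_induction with
  | base => intro _; exact le_rfl
  | succ m hm ih =>
    intro hmn
    have hmn' : m ≤ n := by omega
    have h1 := ih hmn'
    have hmono : S n (m + 1) ≤ S n (d + 1) := S_mono n (by omega)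
    have hinv : (0:ℝ) ≤ 1 / lam₁ := by positivity
    have hneg' : t₁ + (1 / lam₁) * (S n (m + 1) - 1) ≤ 0 := by
      have := mul_le_mul_of_nonneg_left (by linarith : S n (m+1) - 1 ≤ S n (d+1) - 1) hinv
      linarith
    rw [diff_eq n t₁ lam₁ hlam.ne' m (by omega) hmn']
    linarith

lemma E_one (n : ℕ) (t₁ lam₁ : ℝ) (hn : 1 ≤ n) :
    expectedRuntime n t₁ lam₁ 1 = t₁ + (1 / lam₁) * (1 + S n 2) := by
  rw [E_eq, S_succ n 1 hn]
  norm_num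

lemma E_top (n : ℕ) (t₁ lam₁ : ℝ) (hn : 1 ≤ n) :
    expectedRuntime n t₁ lam₁ n = (n : ℝ) * t₁ + 1 / lam₁ := by
  have hn0 : (n : ℝ) ≠ 0 := Nat.cast_ne_zero.mpr (by omega)
  rw [E_eq]
  have : S n n = 1 / (n : ℝ) := by
    rw [S, Finset.Icc_self, Finset.sum_singleton]
  rw [this]
  rw [div_mul_div_comm, mul_one, mul_comm lam₁ ((n:ℝ)), ← div_div, div_self hn0]

end OptDAux

open OptDAux

/-- Proposition 1: if `λ₁·t₁ < (1/(n−1))·∑_{i=2}^{n} 1/i` then `d = n` minimizes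
`E(d)` over `d ∈ {1, …, n}`; if `λ₁·t₁ ≥ (1/(n−1))·∑_{i=2}^{n} 1/i` then `d = 1`
minimizes `E(d)` over `d ∈ {1, …, n}`. -/
theorem optimal_d_computation_dominant
    (n : ℕ) (hn : 2 ≤ n) (t₁ lam₁ : ℝ) (ht₁ : 0 < t₁) (hlam₁ : 0 < lam₁) :
    (lam₁ * t₁ < (1 / ((n : ℝ) - 1)) * ∑ i ∈ Finset.Icc 2 n, (1 : ℝ) / (i : ℝ) →
      ∀ d, 1 ≤ d → d ≤ n →
        expectedRuntime n t₁ lam₁ n ≤ expectedRuntime n t₁ lam₁ d) ∧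
    ((1 / ((n : ℝ) - 1)) * ∑ i ∈ Finset.Icc 2 n, (1 : ℝ) / (i : ℝ) ≤ lam₁ * t₁ →
      ∀ d, 1 ≤ d → d ≤ n →
        expectedRuntime n t₁ lam₁ 1 ≤ expectedRuntime n t₁ lam₁ d) := by
  have hn1 : 1 ≤ n := by omega
  have hn1R : (0:ℝ) < (n : ℝ) - 1 := by
    have : (2:ℝ) ≤ (n : ℝ) := by exact_mod_cast hn
    linarith
  have hS2 : (∑ i ∈ Finset.Icc 2 n, (1 : ℝ) / (i : ℝ)) = S n 2 := rfl
  have hE1 := E_one n t₁ lam₁ hn1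
  have hEn := E_top n t₁ lam₁ hn1
  constructor
  · intro hlt d hd1 hdn
    rw [hS2] at hlt
    -- E n ≤ E 1
    have hEn1 : expectedRuntime n t₁ lam₁ n ≤ expectedRuntime n t₁ lam₁ 1 := by
      have h1 : lam₁ * t₁ * ((n:ℝ) - 1) < S n 2 := by
        rw [div_mul_eq_mul_div, one_mul, lt_div_iff₀ hn1R] at hlt
        linarith [hlt]
      have h2 : t₁ * ((n:ℝ) - 1) ≤ (1 / lam₁) * S n 2 := by
        rw [← sub_nonneg]
        have heq : (1 / lam₁) * S n 2 - t₁ * ((n:ℝ) - 1)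
            = (1 / lam₁) * (S n 2 - lam₁ * t₁ * ((n:ℝ) - 1)) := by
          field_simp
        rw [heq]
        exact mul_nonneg (by positivity) (by linarith)
      rw [hE1, hEn]; linarith
    rcases eq_or_lt_of_le hdn with rfl | hdn'
    · exact le_rfl
    · by_cases hpos : 0 ≤ t₁ + (1 / lam₁) * (S n (d + 1) - 1)
      · exact le_trans hEn1 (up n t₁ lam₁ hlam₁ d hd1 hdn hpos)
      · exact down n t₁ lam₁ hlam₁ d hd1 (le_of_not_ge hpos) n hdn le_rfl
  · intro hge d hd1 hdn
    rw [hS2] at hge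
    have hE1n : expectedRuntime n t₁ lam₁ 1 ≤ expectedRuntime n t₁ lam₁ n := by
      have h1 : S n 2 ≤ lam₁ * t₁ * ((n:ℝ) - 1) := by
        rw [div_mul_eq_mul_div, one_mul, div_le_iff₀ hn1R] at hge
        linarith [hge]
      have h2 : (1 / lam₁) * S n 2 ≤ t₁ * ((n:ℝ) - 1) := by
        rw [← sub_nonneg]
        have heq : t₁ * ((n:ℝ) - 1) - (1 / lam₁) * S n 2
            = (1 / lam₁) * (lam₁ * t₁ * ((n:ℝ) - 1) - S n 2) := by
          field_simp
        rw [heq]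
        exact mul_nonneg (by positivity) (by linarith)
      rw [hE1, hEn]; linarith
    by_cases hpos : 0 ≤ t₁ + (1 / lam₁) * (S n (d + 1) - 1)
    · exact up n t₁ lam₁ hlam₁ d hd1 hdn hpos
    · exact le_trans hE1n
        (down n t₁ lam₁ hlam₁ d hd1 (le_of_not_ge hpos) n hdn le_rfl)
end

section
/- Endpoint-minimizer lemma (proved in the proof of Proposition 1): Let n ≥ 2 be an integer and t₁, λ₁ > 0 real numbers, and define E(d) := d·t₁ + (d/λ₁)·Σ_{i=d}^{n} (1/i) for integers 1 ≤ d ≤ n. Then the minimum of E over {1, …, n} is attained at d = 1 or at d = n; equivalently, min(E(1), E(n)) ≤ E(d) for every d ∈ {1, …, n}. -/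
lemma S_antitone (n a b : ℕ) (h : a ≤ b) :
    ∑ i ∈ Finset.Icc b n, (1:ℝ)/(i:ℝ) ≤ ∑ i ∈ Finset.Icc a n, (1:ℝ)/(i:ℝ) := by
  apply Finset.sum_le_sum_of_subset_of_nonneg (Finset.Icc_subset_Icc_left h)
  intro i _ _
  positivity

lemma diff_eq (n : ℕ) (t₁ lam₁ : ℝ) (hlam₁ : 0 < lam₁) (d : ℕ) (hd : 1 ≤ d) (hdn : d ≤ n) :
    expectedRuntime n t₁ lam₁ (d+1) =
      expectedRuntime n t₁ lam₁ d
        + (t₁ + ((∑ i ∈ Finset.Icc (d+1) n, (1:ℝ)/(i:ℝ)) - 1)/lam₁) := by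
  unfold expectedRuntime
  have hsplit : ∑ i ∈ Finset.Icc d n, (1:ℝ)/(i:ℝ)
      = 1/(d:ℝ) + ∑ i ∈ Finset.Icc (d+1) n, (1:ℝ)/(i:ℝ) := by
    rw [Finset.Icc_eq_cons_Ioc hdn, Finset.sum_cons]
    congr 1
    rw [← Finset.Icc_add_one_left_eq_Ioc]
  rw [hsplit]
  have hd0 : (d:ℝ) ≠ 0 := by positivity
  have hl0 : lam₁ ≠ 0 := ne_of_gt hlam₁
  push_cast
  field_simp
  ring

lemma chain_le (f : ℕ → ℝ) (a b : ℕ) (hab : a ≤ b)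
    (h : ∀ k, a ≤ k → k < b → f k ≤ f (k+1)) : f a ≤ f b := by
  induction b, hab using Nat.le_induction with
  | base => exact le_refl _
  | succ m ham ih =>
    exact le_trans (ih (fun k hk hk' => h k hk (by omega))) (h m ham (by omega))

/-- Endpoint-minimizer lemma: the minimum of `E` over `{1, …, n}` is attained at
`d = 1` or at `d = n`; equivalently `min(E(1), E(n)) ≤ E(d)` for every
`d ∈ {1, …, n}`. -/
theorem expectedRuntime_min_at_endpoints
    (n : ℕ) (hn : 2 ≤ n) (t₁ lam₁ : ℝ) (ht₁ : 0 < t₁) (hlam₁ : 0 < lam₁) :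
    ∀ d, 1 ≤ d → d ≤ n →
      min (expectedRuntime n t₁ lam₁ 1) (expectedRuntime n t₁ lam₁ n) ≤
        expectedRuntime n t₁ lam₁ d := by
  intro d hd1 hdn
  set S : ℕ → ℝ := fun a => ∑ i ∈ Finset.Icc a n, (1:ℝ)/(i:ℝ) with hS
  rcases le_or_gt 0 (t₁ + (S (d+1) - 1)/lam₁) with hpos | hneg
  · refine le_trans (min_le_left _ _) ?_
    apply chain_le (expectedRuntime n t₁ lam₁) 1 d hd1
    intro k hk1 hkd
    rw [diff_eq n t₁ lam₁ hlam₁ k hk1 (by omega)]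
    have hSk : S (d+1) ≤ S (k+1) := S_antitone n (k+1) (d+1) (by omega)
    have : 0 ≤ t₁ + (S (k+1) - 1)/lam₁ := by
      refine le_trans hpos ?_
      gcongr
    linarith
  · refine le_trans (min_le_right _ _) ?_
    have := chain_le (fun k => -(expectedRuntime n t₁ lam₁ k)) d n hdn ?_
    · simpa using this
    intro k hkd hkn
    rw [diff_eq n t₁ lam₁ hlam₁ k (by omega) (by omega)]
    have hSk : S (k+1) ≤ S (d+1) := S_antitone n (d+1) (k+1) (by omega)
    have : t₁ + (S (k+1) - 1)/lam₁ ≤ t₁ + (S (d+1) - 1)/lam₁ := by gcongr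
    linarith
end

section
/- Proposition 2: Let n be a positive integer and λ₂, t₂ > 0 real numbers. Define h : (0,1) → ℝ by h(α) = (1/(α·n))·(t₂ − (1/λ₂)·log(1 − α)). Then there is a unique α* ∈ (0,1) satisfying α*/(1 − α*) + log(1 − α*) = λ₂·t₂, and h attains its minimum over (0,1) at α*; moreover h(α*) < h(α) for every α ∈ (0,1) with α ≠ α*. -/
/-!
Write `g x = x / (1 - x) + log (1 - x)`. Since `g α - (β / (1 - α) + log (1 - β)) = u - 1 - log u`
with `u = (1 - β) / (1 - α)`, the inequality `log u < u - 1` for `u ≠ 1` shows that the tangent line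
`β ↦ β / (1 - α) + log (1 - β)` stays strictly below `g α` away from `β = α`. If `g α = λ₂ t₂`, this
says exactly that `(λ₂ t₂ - log (1 - β)) / β > 1 / (1 - α) = (λ₂ t₂ - log (1 - α)) / α`, and
`h x = (λ₂ t₂ - log (1 - x)) / (x λ₂ n)`. Uniqueness follows by exchanging the roles of two roots, and
existence from the intermediate value theorem, as `g (1 - exp (-y)) = exp y - 1 - y`.
-/

open Real Set

lemma div_one_sub_add_log_one_sub_lt {α β : ℝ} (hα : α < 1) (hβ : β < 1) (hne : β ≠ α) :
    β / (1 - α) + log (1 - β) < α / (1 - α) + log (1 - α) := by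
  have hα' : 0 < 1 - α := by linarith
  have hβ' : 0 < 1 - β := by linarith
  have hu : (1 - β) / (1 - α) ≠ 1 := by
    rw [Ne, div_eq_one_iff_eq hα'.ne']
    exact fun h => hne (by linarith)
  have hlog := log_lt_sub_one_of_pos (div_pos hβ' hα') hu
  rw [log_div hβ'.ne' hα'.ne'] at hlog
  have hu_sub_one : (1 - β) / (1 - α) - 1 = α / (1 - α) - β / (1 - α) := by
    field_simp
    ring
  linarith

lemma div_lt_div_of_div_one_sub_add_log_one_sub_eq {α β c : ℝ} (hα : α ∈ Ioo (0 : ℝ) 1)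
    (hβ : β ∈ Ioo (0 : ℝ) 1) (hne : β ≠ α) (hc : α / (1 - α) + log (1 - α) = c) :
    (c - log (1 - α)) / α < (c - log (1 - β)) / β := by
  have hvalue : (c - log (1 - α)) / α = 1 / (1 - α) := by
    rw [← hc, add_sub_cancel_right, div_div_cancel_left' hα.1.ne', one_div]
  rw [hvalue, lt_div_iff₀ hβ.1, one_div_mul_eq_div]
  linarith [div_one_sub_add_log_one_sub_lt hα.2 hβ.2 hne]

lemma exists_div_one_sub_add_log_one_sub_eq {c : ℝ} (hc : 0 < c) :
    ∃ α ∈ Ioo (0 : ℝ) 1, α / (1 - α) + log (1 - α) = c := by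
  have hcont : ContinuousOn (fun y => exp y - 1 - y) (Icc 0 (c + 1)) := by fun_prop
  have hupper : c ≤ exp (c + 1) - 1 - (c + 1) := by
    nlinarith [quadratic_le_exp_of_nonneg (by linarith : (0 : ℝ) ≤ c + 1)]
  obtain ⟨y, hy, hyc⟩ := intermediate_value_Icc (by linarith) hcont
    ⟨by simp [hc.le], hupper⟩
  have hy0 : 0 < y := by
    refine lt_of_le_of_ne hy.1 fun h => ?_
    simp only [← h, exp_zero, sub_self] at hyc
    linarith
  refine ⟨1 - exp (-y), ⟨by simp [hy0], by simp [exp_pos]⟩, ?_⟩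
  rw [sub_sub_cancel, log_exp, exp_neg, ← hyc]
  field_simp
  ring

/-- Proposition 2: for `h(α) = (1/(α·n))·(t₂ − (1/λ₂)·log(1 − α))` on `(0,1)`,
there is a unique `α* ∈ (0,1)` with `α*/(1 − α*) + log(1 − α*) = λ₂·t₂`, and `h`
attains its strict minimum over `(0,1)` at `α*`. -/
theorem optimal_communication_ratio
    (n : ℕ) (hn : 0 < n) (lam₂ t₂ : ℝ) (hlam₂ : 0 < lam₂) (ht₂ : 0 < t₂) :
    ∃ α : ℝ, α ∈ Set.Ioo (0 : ℝ) 1 ∧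
      α / (1 - α) + Real.log (1 - α) = lam₂ * t₂ ∧
      (∀ β ∈ Set.Ioo (0 : ℝ) 1,
        β / (1 - β) + Real.log (1 - β) = lam₂ * t₂ → β = α) ∧
      (∀ β ∈ Set.Ioo (0 : ℝ) 1, β ≠ α →
        (1 / (α * n)) * (t₂ - (1 / lam₂) * Real.log (1 - α)) <
          (1 / (β * n)) * (t₂ - (1 / lam₂) * Real.log (1 - β))) := by
  obtain ⟨α, hα, hαc⟩ := exists_div_one_sub_add_log_one_sub_eq (mul_pos hlam₂ ht₂)
  have hscale : ∀ x : ℝ, (1 / (x * n)) * (t₂ - (1 / lam₂) * log (1 - x)) =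
      (lam₂ * t₂ - log (1 - x)) / x / (lam₂ * n) := by
    intro x
    field_simp
  refine ⟨α, hα, hαc, fun β hβ hβc => ?_, fun β hβ hne => ?_⟩
  · by_contra hne
    exact (div_lt_div_of_div_one_sub_add_log_one_sub_eq hα hβ hne hαc).asymm
      (div_lt_div_of_div_one_sub_add_log_one_sub_eq hβ hα (Ne.symm hne) hβc)
  · rw [hscale, hscale]
    have hn' : (0 : ℝ) < n := Nat.cast_pos.2 hn
    exact div_lt_div_of_pos_right
      (div_lt_div_of_div_one_sub_add_log_one_sub_eq hα hβ hne hαc) (by positivity)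
end
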